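/- Let X be a real Banach space and consider the punctured space Ω = X ∖ {0}, for which d(x) = ‖x‖. The quasihyperbolic metric k on Ω is conformal in the following sense: for every C > 1 there exists r > 0 such that for all x, y ∈ X ∖ {0} with k(x,y) < r, one has C⁻¹·k(x,y) ≤ ‖x − y‖/‖x‖ ≤ C·k(x,y). -/

import Mathlib

/-- The quasihyperbolic length of a path `γ` on `[a,b]` in a domain `Ω`:
`ℓ_k(γ) = ∫ₐᵇ ‖γ′(t)‖ / d(γ(t)) dt`, where `d(x) = dist(x, X ∖ Ω)`.
For `Ω = X ∖ {0}` one has `d(x) = ‖x‖`. -/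
noncomputable def qhLength {X : Type*} [NormedAddCommGroup X] [NormedSpace ℝ X]
    (Ω : Set X) (γ : ℝ → X) (a b : ℝ) : ℝ :=
  ∫ t in a..b, ‖deriv γ t‖ / Metric.infDist (γ t) Ωᶜ

/-- The quasihyperbolic distance on a domain `Ω`: the infimum of quasihyperbolic lengths
over continuously differentiable paths in `Ω` joining the two points. -/
noncomputable def qhDist {X : Type*} [NormedAddCommGroup X] [NormedSpace ℝ X]
    (Ω : Set X) (x y : X) : ℝ :=
  sInf ((fun γ : ℝ → X => qhLength Ω γ 0 1) ''
    {γ | ContDiff ℝ 1 γ ∧ Set.MapsTo γ (Set.Icc 0 1) Ω ∧ γ 0 = x ∧ γ 1 = y})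


/-!
Along a C¹ path `γ` in `X ∖ {0}` starting at `x`, the triangle inequality gives
`‖γ t‖ ≤ ‖x‖ + L t`, where `L t` is the length of `γ` up to time `t`. Hence the quasihyperbolic
length of `γ` dominates `∫ dL / (‖x‖ + L) = log (1 + L / ‖x‖) ≥ log (1 + ‖x - y‖ / ‖x‖)`.
Such paths exist (so `k` is not the junk value `sInf ∅ = 0`) because in dimension at least two
a segment through `0` can be bent off its line. Conversely, the segment `[x, y]` has
quasihyperbolic length at most `s / (1 - s)` with `s = ‖x - y‖ / ‖x‖ < 1`. Both bounds are
`s + O(s²)`, and a small `k(x, y)` forces a small `s`.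
-/

section

open Set Metric intervalIntegral

variable {X : Type*} [NormedAddCommGroup X] [NormedSpace ℝ X]

def qhPaths (Ω : Set X) (x y : X) : Set (ℝ → X) :=
  {γ | ContDiff ℝ 1 γ ∧ MapsTo γ (Icc 0 1) Ω ∧ γ 0 = x ∧ γ 1 = y}

theorem qhLength_nonneg (Ω : Set X) (γ : ℝ → X) : 0 ≤ qhLength Ω γ 0 1 :=
  integral_nonneg zero_le_one fun _ _ => div_nonneg (norm_nonneg _) infDist_nonneg

theorem qhDist_le_qhLength {Ω : Set X} {x y : X} {γ : ℝ → X} (hγ : γ ∈ qhPaths Ω x y) :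
    qhDist Ω x y ≤ qhLength Ω γ 0 1 :=
  csInf_le ⟨0, by rintro _ ⟨γ, -, rfl⟩; exact qhLength_nonneg Ω γ⟩ ⟨γ, hγ, rfl⟩

theorem le_qhDist {Ω : Set X} {x y : X} {c : ℝ} (hne : (qhPaths Ω x y).Nonempty)
    (h : ∀ γ ∈ qhPaths Ω x y, c ≤ qhLength Ω γ 0 1) : c ≤ qhDist Ω x y :=
  le_csInf (hne.image _) <| by rintro _ ⟨γ, hγ, rfl⟩; exact h γ hγ

theorem qhLength_compl_zero (γ : ℝ → X) (a b : ℝ) :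
    qhLength {0}ᶜ γ a b = ∫ t in a..b, ‖deriv γ t‖ / ‖γ t‖ := by
  simp only [qhLength, compl_compl, infDist_singleton, dist_zero_right]

theorem norm_sub_le_integral_norm_deriv {γ : ℝ → X} (hγ : ContDiff ℝ 1 γ) {a b : ℝ}
    (hab : a ≤ b) : ‖γ b - γ a‖ ≤ ∫ t in a..b, ‖deriv γ t‖ := by
  have hd : Continuous fun t => ‖deriv γ t‖ := (hγ.continuous_deriv le_rfl).norm
  refine image_norm_le_of_norm_deriv_right_le_deriv_boundary (f := fun t => γ t - γ a)
    (hγ.continuous.sub continuous_const).continuousOn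
    (fun t _ => ((hγ.differentiable one_ne_zero t).hasDerivAt.sub_const (γ a)).hasDerivWithinAt)
    (by simp) (fun t => (hd.integral_hasStrictDerivAt a t).hasDerivAt) (fun _ _ => le_rfl)
    (right_mem_Icc.2 hab)

theorem log_one_add_le_qhLength_compl_zero {γ : ℝ → X} (hγ : ContDiff ℝ 1 γ) {a b : ℝ}
    (hab : a ≤ b) (hγ0 : MapsTo γ (Icc a b) {0}ᶜ) :
    Real.log (1 + ‖γ b - γ a‖ / ‖γ a‖) ≤ qhLength {0}ᶜ γ a b := by
  have hpos : ∀ t ∈ Icc a b, 0 < ‖γ t‖ := fun t ht => norm_pos_iff.2 (hγ0 ht)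
  have ha := hpos a (left_mem_Icc.2 hab)
  have hd : Continuous fun t => ‖deriv γ t‖ := (hγ.continuous_deriv le_rfl).norm
  set L : ℝ → ℝ := fun t => ∫ s in a..t, ‖deriv γ s‖
  have hL : ∀ t, HasDerivAt L ‖deriv γ t‖ t := fun t =>
    (hd.integral_hasStrictDerivAt a t).hasDerivAt
  have hLpos : ∀ t ∈ Icc a b, 0 < ‖γ a‖ + L t := fun t ht =>
    add_pos_of_pos_of_nonneg ha (integral_nonneg ht.1 fun _ _ => norm_nonneg _)
  have hcomp : Real.log (‖γ a‖ + L b) - Real.log (‖γ a‖ + L a) ≤ qhLength {0}ᶜ γ a b := by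
    rw [qhLength_compl_zero]
    have hlogL : ∀ t ∈ Icc a b,
        HasDerivAt (fun u => Real.log (‖γ a‖ + L u)) (‖deriv γ t‖ / (‖γ a‖ + L t)) t :=
      fun t ht => ((hL t).const_add _).log (hLpos t ht).ne'
    refine sub_le_integral_of_hasDeriv_right_of_le hab
      (fun t ht => (hlogL t ht).continuousAt.continuousWithinAt)
      (fun t ht => (hlogL t (Ioo_subset_Icc_self ht)).hasDerivWithinAt)
      (hd.continuousOn.div hγ.continuous.norm.continuousOn
        fun t ht => (hpos t ht).ne').integrableOn_Icc
      fun t ht => ?_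
    have ht := Ioo_subset_Icc_self ht
    refine div_le_div_of_nonneg_left (norm_nonneg _) (hpos t ht) ?_
    exact (norm_le_norm_add_norm_sub' _ _).trans
      (add_le_add_right (norm_sub_le_integral_norm_deriv hγ ht.1) _)
  calc Real.log (1 + ‖γ b - γ a‖ / ‖γ a‖)
      = Real.log (‖γ a‖ + ‖γ b - γ a‖) - Real.log ‖γ a‖ := by
        rw [← Real.log_div (by positivity) ha.ne', add_div, div_self ha.ne']
    _ ≤ Real.log (‖γ a‖ + L b) - Real.log (‖γ a‖ + L a) := by
        rw [show L a = 0 from integral_same, add_zero]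
        gcongr
        exact norm_sub_le_integral_norm_deriv hγ hab
    _ ≤ qhLength {0}ᶜ γ a b := hcomp

theorem log_one_add_le_qhDist_compl_zero {x y : X} (hne : (qhPaths {0}ᶜ x y).Nonempty) :
    Real.log (1 + ‖x - y‖ / ‖x‖) ≤ qhDist {0}ᶜ x y := by
  refine le_qhDist hne fun γ ⟨hγ, hγ0, h0, h1⟩ => ?_
  simpa [h0, h1, norm_sub_rev y x] using log_one_add_le_qhLength_compl_zero hγ zero_le_one hγ0

theorem qhDist_compl_zero_le {x y : X} (h : ‖x - y‖ < ‖x‖) :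
    qhDist {0}ᶜ x y ≤ ‖x - y‖ / (‖x‖ - ‖x - y‖) := by
  set γ : ℝ → X := fun t => x + t • (y - x)
  have hγ : ContDiff ℝ 1 γ := by fun_prop
  have hderiv : ∀ t, deriv γ t = y - x := fun t =>
    (((hasDerivAt_id t).smul_const (y - x)).const_add x).deriv.trans (one_smul ℝ _)
  have hpos : 0 < ‖x‖ - ‖x - y‖ := sub_pos.2 h
  have hnorm : ∀ t ∈ Icc (0 : ℝ) 1, ‖x‖ - ‖x - y‖ ≤ ‖γ t‖ := fun t ht =>
    calc ‖x‖ - ‖x - y‖ ≤ ‖x‖ - ‖t • (y - x)‖ := by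
          rw [norm_smul, norm_sub_rev y, Real.norm_of_nonneg ht.1]
          gcongr
          exact mul_le_of_le_one_left (norm_nonneg _) ht.2
      _ ≤ ‖γ t‖ := norm_sub_le_norm_add _ _
  calc qhDist {0}ᶜ x y ≤ qhLength {0}ᶜ γ 0 1 :=
        qhDist_le_qhLength ⟨hγ, fun t ht => norm_pos_iff.1 (hpos.trans_le (hnorm t ht)),
          by simp [γ], by simp [γ]⟩
    _ ≤ ‖x - y‖ / (‖x‖ - ‖x - y‖) * |1 - 0| := by
        rw [qhLength_compl_zero]
        refine (Real.le_norm_self _).trans (norm_integral_le_of_norm_le_const fun t ht => ?_)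
        rw [uIoc_of_le zero_le_one] at ht
        rw [hderiv, norm_sub_rev, Real.norm_of_nonneg (by positivity)]
        exact div_le_div_of_nonneg_left (norm_nonneg _) hpos (hnorm t (Ioc_subset_Icc_self ht))
    _ = ‖x - y‖ / (‖x‖ - ‖x - y‖) := by simp

theorem qhPaths_compl_zero_nonempty (hdim : 1 < Module.rank ℝ X) {x y : X} (hx : x ≠ 0)
    (hy : y ≠ 0) : (qhPaths {0}ᶜ x y).Nonempty := by
  obtain ⟨w, a, b, hw, rfl, hb⟩ :
      ∃ (w : X) (a b : ℝ), LinearIndependent ℝ ![x, w] ∧ y = a • x + b • w ∧ 0 ≤ b := by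
    by_cases hyx : ∃ a : ℝ, a • x = y
    · obtain ⟨a, rfl⟩ := hyx
      obtain ⟨v, hv⟩ := exists_linearIndependent_pair_of_one_lt_rank hdim hx
      exact ⟨v, a, 0, hv, by simp, le_rfl⟩
    · exact ⟨y, 0, 1, (LinearIndependent.pair_iff' hx).2 (not_exists.1 hyx), by simp, zero_le_one⟩
  refine ⟨fun t => (1 - t + t * a) • x + (t * (1 + b - t)) • w, by fun_prop,
    fun t ht h => ?_, by simp, by simp⟩
  obtain ⟨h1, h2⟩ := LinearIndependent.pair_iff.1 hw _ _ h
  rcases mul_eq_zero.1 h2 with rfl | h3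
  · simp at h1
  · obtain ⟨rfl, rfl⟩ : b = 0 ∧ t = 1 := ⟨by linarith [ht.2], by linarith [ht.2]⟩
    simp only [sub_self, one_mul, zero_add] at h1
    simp [h1] at hy

theorem le_mul_log_one_add {s C : ℝ} (hs : 0 ≤ s) (hC : 1 + s ≤ C) :
    s ≤ C * Real.log (1 + s) := by
  have hlog := Real.one_sub_inv_le_log_of_pos (by linarith : 0 < 1 + s)
  calc s = (1 + s) * (1 - (1 + s)⁻¹) := by field_simp; ring
    _ ≤ C * Real.log (1 + s) :=
        mul_le_mul hC hlog (sub_nonneg.2 (inv_le_one_of_one_le₀ (by linarith))) (by linarith)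

theorem div_one_sub_le_mul {s C : ℝ} (hs : 0 ≤ s) (hC : 0 < C) (h : C⁻¹ ≤ 1 - s) :
    s / (1 - s) ≤ C * s := by
  have h1s : 0 < 1 - s := (inv_pos.2 hC).trans_le h
  rw [div_le_iff₀ h1s, mul_assoc]
  exact le_mul_of_one_le_right hs ((inv_le_iff_one_le_mul₀' hC).1 h) |>.trans_eq (by ring)

end

theorem qhDist_punctured_conformal_general
    {X : Type*} [NormedAddCommGroup X] [NormedSpace ℝ X]
    (hdim : 1 < Module.rank ℝ X)
    (C : ℝ) (hC : 1 < C) :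
    ∃ r > 0, ∀ x y : X, x ≠ 0 → y ≠ 0 →
      qhDist ({0}ᶜ : Set X) x y < r →
      C⁻¹ * qhDist ({0}ᶜ : Set X) x y ≤ ‖x - y‖ / ‖x‖ ∧
        ‖x - y‖ / ‖x‖ ≤ C * qhDist ({0}ᶜ : Set X) x y := by
  have hC0 : 0 < C := one_pos.trans hC
  set m := min (1 - C⁻¹) (C - 1)
  have hm : 0 < m := lt_min (sub_pos.2 (inv_lt_one_of_one_lt₀ hC)) (sub_pos.2 hC)
  refine ⟨Real.log (1 + m), Real.log_pos (by linarith), fun x y hx hy hk => ?_⟩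
  set s := ‖x - y‖ / ‖x‖
  have hx' : 0 < ‖x‖ := norm_pos_iff.2 hx
  have hs : 0 ≤ s := by positivity
  have hlog : Real.log (1 + s) ≤ qhDist {0}ᶜ x y :=
    log_one_add_le_qhDist_compl_zero (qhPaths_compl_zero_nonempty hdim hx hy)
  have hsm : s < m := by
    by_contra! h
    exact hk.not_ge ((Real.log_le_log (by linarith) (by linarith)).trans hlog)
  have hsC : s < 1 - C⁻¹ := hsm.trans_le (min_le_left _ _)
  refine ⟨?_, ?_⟩
  · have hxy : ‖x - y‖ < ‖x‖ := (div_lt_one hx').1 (by linarith [inv_pos.2 hC0])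
    have hupper := qhDist_compl_zero_le hxy
    rw [← div_div_div_cancel_right₀ hx'.ne', sub_div, div_self hx'.ne'] at hupper
    rw [inv_mul_le_iff₀ hC0]
    exact hupper.trans (div_one_sub_le_mul hs hC0 (by linarith))
  · calc s ≤ C * Real.log (1 + s) :=
          le_mul_log_one_add hs (by linarith [min_le_right (1 - C⁻¹) (C - 1)])
      _ ≤ C * qhDist {0}ᶜ x y := by gcongr

/-- The quasihyperbolic metric on the punctured Banach space `X ∖ {0}` is conformal:
for every `C > 1` there is `r > 0` such that `C⁻¹·k(x,y) ≤ ‖x − y‖/‖x‖ ≤ C·k(x,y)`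
whenever `k(x,y) < r`. -/
theorem qhDist_punctured_conformal
    {X : Type*} [NormedAddCommGroup X] [NormedSpace ℝ X] [CompleteSpace X]
    (hdim : 1 < Module.rank ℝ X)
    (C : ℝ) (hC : 1 < C) :
    ∃ r > 0, ∀ x y : X, x ≠ 0 → y ≠ 0 →
      qhDist ({0}ᶜ : Set X) x y < r →
      C⁻¹ * qhDist ({0}ᶜ : Set X) x y ≤ ‖x - y‖ / ‖x‖ ∧
        ‖x - y‖ / ‖x‖ ≤ C * qhDist ({0}ᶜ : Set X) x y :=
  qhDist_punctured_conformal_general hdim C hC
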